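/- arXiv:1801.10556 — 8 statements merged into one kernel-verified Lean document; each statement's English description precedes it below -/
import Mathlib

section
/- If G_n^{(f)} < 1 for every n with 0 ≤ n ≤ P−1, then f·(q + 1 + f − P + r) < P. -/
/-- Necessary condition for an (f,P)-cyclic execution. -/
theorem cyclic_execution_necessary_condition
    (P : ℕ) (hP : 0 < P) (q : ℕ) (r : ℝ) (hr0 : 0 ≤ r) (hr1 : r < 1)
    (f : ℕ) (S : ℕ → ℝ)
    (hS : ∀ m n : ℕ, m < n → n ≤ P - 1 → S m < S n)
    (G1 : ℕ → ℝ)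
    (hG1 : ∀ n : ℕ, 1 ≤ n → n ≤ P - 1 → G1 n = S n - S (n - 1) - 1)
    (hG10 : G1 0 = S 0 + q + r + f - S (P - 1))
    (G : ℕ → ℕ → ℝ)
    (hG : ∀ n k : ℕ,
      G n k = ∑ i ∈ Finset.range k, G1 (((n : ℤ) - i) % (P : ℤ)).toNat)
    (hGf : ∀ n : ℕ, n ≤ P - 1 → G n f < 1) :
    (f : ℝ) * ((q : ℝ) + 1 + f - P + r) < P := by
  have hPZ : (0 : ℤ) < (P : ℤ) := by exact_mod_cast hP
  -- total of first-order gaps over one period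
  have hT : ∑ n ∈ Finset.range P, G1 n = (q : ℝ) + r + f - P + 1 := by
    obtain ⟨P', rfl⟩ : ∃ P', P = P' + 1 := ⟨P - 1, by omega⟩
    rw [Finset.sum_range_succ']
    have h1 : ∀ n ∈ Finset.range P', G1 (n + 1) = S (n + 1) - S n - 1 := by
      intro n hn
      have hn' : n < P' := Finset.mem_range.mp hn
      rw [hG1 (n + 1) (by omega) (by omega)]
      simp
    rw [Finset.sum_congr rfl h1, hG10]
    have h2 : ∑ n ∈ Finset.range P', (S (n + 1) - S n - 1)
        = (S P' - S 0) - P' := by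
      rw [Finset.sum_sub_distrib, Finset.sum_range_sub]
      simp
    rw [h2]
    simp only [Nat.add_sub_cancel]
    push_cast
    ring
  -- reindexing: for each i, the shifted sum equals the full sum
  have hshift : ∀ i : ℕ,
      ∑ n ∈ Finset.range P, G1 (((n : ℤ) - i) % (P : ℤ)).toNat
        = ∑ n ∈ Finset.range P, G1 n := by
    intro i
    refine Finset.sum_nbij' (i := fun n => (((n : ℤ) - i) % (P : ℤ)).toNat)
      (j := fun n => (((n : ℤ) + i) % (P : ℤ)).toNat) ?_ ?_ ?_ ?_ ?_
    · intro a ha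
      have := Int.emod_nonneg ((a : ℤ) - i) (by omega : (P:ℤ) ≠ 0)
      have h2 := Int.emod_lt_of_pos ((a : ℤ) - i) hPZ
      simp only [Finset.mem_range]
      omega
    · intro a ha
      have := Int.emod_nonneg ((a : ℤ) + i) (by omega : (P:ℤ) ≠ 0)
      have h2 := Int.emod_lt_of_pos ((a : ℤ) + i) hPZ
      simp only [Finset.mem_range]
      omega
    · intro a ha
      have ha' : a < P := Finset.mem_range.mp ha
      have hnn := Int.emod_nonneg ((a : ℤ) - i) (by omega : (P:ℤ) ≠ 0)
      show ((((((a:ℤ) - i) % P).toNat : ℤ) + i) % P).toNat = a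
      rw [Int.toNat_of_nonneg hnn, Int.emod_add_emod, sub_add_cancel,
        Int.emod_eq_of_lt (by omega) (by exact_mod_cast ha'), Int.toNat_natCast]
    · intro a ha
      have ha' : a < P := Finset.mem_range.mp ha
      have hnn := Int.emod_nonneg ((a : ℤ) + i) (by omega : (P:ℤ) ≠ 0)
      show ((((((a:ℤ) + i) % P).toNat : ℤ) - i) % P).toNat = a
      rw [Int.toNat_of_nonneg hnn, Int.sub_emod, Int.emod_emod_of_dvd _ dvd_rfl,
        ← Int.sub_emod, add_sub_cancel_right,
        Int.emod_eq_of_lt (by omega) (by exact_mod_cast ha'), Int.toNat_natCast]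
    · intro a ha; rfl
  -- sum all f-th order gaps over a period
  have hsum : ∑ n ∈ Finset.range P, G n f = (f : ℝ) * ((q : ℝ) + r + f - P + 1) := by
    calc ∑ n ∈ Finset.range P, G n f
        = ∑ n ∈ Finset.range P, ∑ i ∈ Finset.range f,
            G1 (((n : ℤ) - i) % (P : ℤ)).toNat := by
          exact Finset.sum_congr rfl fun n _ => hG n f
      _ = ∑ i ∈ Finset.range f, ∑ n ∈ Finset.range P,
            G1 (((n : ℤ) - i) % (P : ℤ)).toNat := Finset.sum_comm
      _ = ∑ i ∈ Finset.range f, ((q : ℝ) + r + f - P + 1) := by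
          exact Finset.sum_congr rfl fun i _ => by rw [hshift i, hT]
      _ = (f : ℝ) * ((q : ℝ) + r + f - P + 1) := by
          rw [Finset.sum_const, Finset.card_range, nsmul_eq_mul]
  have hlt : ∑ n ∈ Finset.range P, G n f < P := by
    calc ∑ n ∈ Finset.range P, G n f < ∑ n ∈ Finset.range P, (1 : ℝ) := by
          apply Finset.sum_lt_sum_of_nonempty (Finset.nonempty_range_iff.mpr (by omega))
          intro n hn
          exact hGf n (by have := Finset.mem_range.mp hn; omega)
      _ = P := by simp
  rw [hsum] at hlt
  calc (f : ℝ) * ((q : ℝ) + 1 + f - P + r) = (f:ℝ) * ((q : ℝ) + r + f - P + 1) := by ring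
    _ < P := hlt
end

section
/- max(0, ⌈S_{P−1} − S_0 − q − r⌉) = f. -/
/-- The seed built from equally spaced successes has exactly f failures. -/
theorem constructed_seed_failures
    (P : ℕ) (hP : 0 < P) (q : ℕ) (r : ℝ) (hr0 : 0 ≤ r) (hr1 : r < 1)
    (f : ℕ)
    (hfmin : max 0 ((P : ℤ) - q - 1) ≤ (f : ℤ))
    (hfmax : (f : ℝ) * ((q : ℝ) + 1 + f - P + r) < P)
    (S : ℕ → ℝ)
    (hS : ∀ n : ℕ, n ≤ P - 1 →
      S n = n * (((q : ℝ) + 1 + f - P + r) / P + 1)) :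
    max 0 ⌈S (P - 1) - S 0 - q - r⌉ = (f : ℤ) := by
  have hS0 := hS 0 (Nat.zero_le _)
  have hSP := hS (P - 1) le_rfl
  have hPpos : (0:ℝ) < P := by exact_mod_cast hP
  set c : ℝ := ((q : ℝ) + 1 + f - P + r) / P with hc
  have hP1 : ((P - 1 : ℕ) : ℝ) = (P : ℝ) - 1 := by
    rw [Nat.cast_sub hP, Nat.cast_one]
  have hkey : S (P - 1) - S 0 - q - r = f - c := by
    rw [hSP, hS0, hP1, hc]
    field_simp
    ring
  rw [hkey]
  have hnum : (0:ℝ) ≤ (q : ℝ) + 1 + f - P + r := by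
    have h1 : (P : ℤ) - q - 1 ≤ f := le_trans (le_max_right _ _) hfmin
    have h2 : (P : ℝ) - q - 1 ≤ f := by exact_mod_cast h1
    linarith
  have hc0 : 0 ≤ c := div_nonneg hnum hPpos.le
  rcases Nat.eq_zero_or_pos f with hf | hf
  · subst hf
    have h1 : ⌈(0:ℝ) - c⌉ ≤ 0 := Int.ceil_le.2 (by push_cast; linarith)
    simp only [Nat.cast_zero]
    omega
  · have hf1 : (1:ℝ) ≤ f := by exact_mod_cast hf
    have hle : (q : ℝ) + 1 + f - P + r ≤ f * ((q : ℝ) + 1 + f - P + r) :=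
      le_mul_of_one_le_left hnum hf1
    have hc1 : c < 1 := by
      rw [hc, div_lt_one hPpos]; linarith
    have hceil : ⌈(f:ℝ) - c⌉ = (f : ℤ) := by
      rw [Int.ceil_eq_iff]
      constructor
      · push_cast; linarith
      · push_cast; linarith
    rw [hceil]
    have : (0:ℤ) ≤ f := Int.ofNat_nonneg f
    omega
end

section
/- Assume f ≤ P. For all nonnegative integers n and k with n + k < f, the attempt times satisfy R_n^{(k)} − S_{P+n−f+k} = G_n^{(f−k)}; consequently, for k ≥ 1 with n + k < f, S_{P+n−f+k} − R_n^{(k−1)} = 1 − G_n^{(f−k)}. -/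
/-!
Extend the success times quasi-periodically to all integers,
`S (j + d P) = S j + d (q + r + f + 1)`. Then every first-order gap, including the
wrap-around gap `G₀`, is `S m - S (m - 1) - 1`, so the `k`-th order gaps telescope to
`G n k = S n - S (n - k) - k`. For `n + k < f ≤ P` the index `n - (f - k)` is
`(P + n + k - f) - P`, one period below an actual success, and the identities follow
by arithmetic.
-/

open Finset

noncomputable def quasiPeriodicExt (P : ℕ) (c : ℝ) (S : ℕ → ℝ) (m : ℤ) : ℝ :=
  S (m % P).toNat + (m / P : ℤ) * c

theorem quasiPeriodicExt_add_mul {P j : ℕ} (hj : j < P) (c : ℝ) (S : ℕ → ℝ) (d : ℤ) :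
    quasiPeriodicExt P c S (j + P * d) = S j + d * c := by
  have hmod : ((j : ℤ) + P * d) % P = j := by
    rw [Int.add_mul_emod_self_left]
    exact Int.emod_eq_of_lt (by omega) (by omega)
  have hdiv : ((j : ℤ) + P * d) / P = d := by
    rw [Int.add_mul_ediv_left _ _ (by omega), Int.ediv_eq_zero_of_lt (by omega) (by omega),
      zero_add]
  simp only [quasiPeriodicExt, hmod, hdiv, Int.toNat_natCast]

theorem gap_eq_quasiPeriodicExt_sub {P : ℕ} (hP : 0 < P) {c : ℝ} {S G1 : ℕ → ℝ}
    (hG1 : ∀ n : ℕ, 1 ≤ n → n ≤ P - 1 → G1 n = S n - S (n - 1) - 1)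
    (hG10 : G1 0 = S 0 + c - 1 - S (P - 1)) (m : ℤ) :
    G1 (m % P).toNat = quasiPeriodicExt P c S m - quasiPeriodicExt P c S (m - 1) - 1 := by
  obtain ⟨j, hj, hjm⟩ : ∃ j : ℕ, j < P ∧ (j : ℤ) = m % P :=
    ⟨(m % P).toNat, by have := Int.emod_lt_of_pos m (b := P) (by omega); omega,
      Int.toNat_of_nonneg (Int.emod_nonneg _ (by omega))⟩
  have hm : m = j + P * (m / P) := by rw [hjm, Int.emod_add_mul_ediv]
  rw [← hjm, Int.toNat_natCast, hm, quasiPeriodicExt_add_mul hj]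
  rcases Nat.eq_zero_or_pos j with rfl | hj0
  · have hprev : (((0 : ℕ) : ℤ) + P * (m / P) - 1) = ((P - 1 : ℕ) : ℤ) + P * (m / P - 1) := by
      push_cast [Nat.one_le_iff_ne_zero.mpr hP.ne']
      ring
    rw [hprev, quasiPeriodicExt_add_mul (by omega), hG10]
    push_cast
    ring
  · have hprev : ((j : ℤ) + P * (m / P) - 1) = ((j - 1 : ℕ) : ℤ) + P * (m / P) := by
      push_cast [Nat.one_le_iff_ne_zero.mpr hj0.ne']
      ring
    rw [hprev, quasiPeriodicExt_add_mul (by omega), hG1 j hj0 (by omega)]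
    ring

theorem sum_range_eq_sub_sub_of_eq_sub_sub_one {g T : ℤ → ℝ}
    (hg : ∀ m, g m = T m - T (m - 1) - 1) (n : ℤ) (k : ℕ) :
    ∑ i ∈ range k, g (n - i) = T n - T (n - k) - k := by
  induction k with
  | zero => simp
  | succ k ih =>
    rw [sum_range_succ, ih, hg, show n - k - 1 = n - (k + 1 : ℕ) by push_cast; ring]
    push_cast
    ring

theorem attempt_success_gap_identities_general
    (P : ℕ) (q : ℕ) (r : ℝ)
    (f : ℕ) (hfP : f ≤ P) (S : ℕ → ℝ)
    (G1 : ℕ → ℝ)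
    (hG1 : ∀ n : ℕ, 1 ≤ n → n ≤ P - 1 → G1 n = S n - S (n - 1) - 1)
    (hG10 : G1 0 = S 0 + q + r + f - S (P - 1))
    (G : ℕ → ℕ → ℝ)
    (hG : ∀ n k : ℕ,
      G n k = ∑ i ∈ Finset.range k, G1 (((n : ℤ) - i) % (P : ℤ)).toNat)
    (R : ℕ → ℕ → ℝ)
    (hR : ∀ n k : ℕ, R n k = S n + 1 + q + r + k) :
    (∀ n k : ℕ, n + k < f → R n k - S (P + n + k - f) = G n (f - k)) ∧
    (∀ n k : ℕ, 1 ≤ k → n + k < f →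
      S (P + n + k - f) - R n (k - 1) = 1 - G n (f - k)) := by
  have attempt_sub_success :
      ∀ n k : ℕ, n + k < f → R n k - S (P + n + k - f) = G n (f - k) := by
    intro n k hnk
    have hstep := gap_eq_quasiPeriodicExt_sub (c := q + r + f + 1) (by omega) hG1
      (by rw [hG10]; ring)
    have hTn : quasiPeriodicExt P (q + r + f + 1) S n = S n := by
      simpa using quasiPeriodicExt_add_mul (show n < P by omega) (q + r + f + 1) S 0
    have hTprev : quasiPeriodicExt P (q + r + f + 1) S (n - (f - k : ℕ)) =
        S (P + n + k - f) - (q + r + f + 1) := by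
      have hidx : (n : ℤ) - (f - k : ℕ) = (P + n + k - f : ℕ) + P * (-1) := by
        push_cast [show k ≤ f by omega, show f ≤ P + n + k by omega]
        ring
      rw [hidx, quasiPeriodicExt_add_mul (by omega)]
      ring
    rw [hG, sum_range_eq_sub_sub_of_eq_sub_sub_one hstep, hTn, hTprev, hR,
      Nat.cast_sub (show k ≤ f by omega)]
    ring
  refine ⟨attempt_sub_success, fun n k hk hnk => ?_⟩
  have h := attempt_sub_success n k hnk
  rw [hR] at h ⊢
  rw [Nat.cast_sub hk]
  push_cast
  linarith

/-- Identities relating attempt times to successes and gaps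
(eq.att.suc and eq.att.suc2). -/
theorem attempt_success_gap_identities
    (P : ℕ) (hP : 0 < P) (q : ℕ) (r : ℝ) (hr0 : 0 ≤ r) (hr1 : r < 1)
    (f : ℕ) (hfP : f ≤ P) (S : ℕ → ℝ)
    (hS : ∀ m n : ℕ, m < n → n ≤ P - 1 → S m < S n)
    (G1 : ℕ → ℝ)
    (hG1 : ∀ n : ℕ, 1 ≤ n → n ≤ P - 1 → G1 n = S n - S (n - 1) - 1)
    (hG10 : G1 0 = S 0 + q + r + f - S (P - 1))
    (G : ℕ → ℕ → ℝ)
    (hG : ∀ n k : ℕ,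
      G n k = ∑ i ∈ Finset.range k, G1 (((n : ℤ) - i) % (P : ℤ)).toNat)
    (R : ℕ → ℕ → ℝ)
    (hR : ∀ n k : ℕ, R n k = S n + 1 + q + r + k) :
    (∀ n k : ℕ, n + k < f → R n k - S (P + n + k - f) = G n (f - k)) ∧
    (∀ n k : ℕ, 1 ≤ k → n + k < f →
      S (P + n + k - f) - R n (k - 1) = 1 - G n (f - k)) :=
  attempt_success_gap_identities_general P q r f hfP S G1 hG1 hG10 G hG R hR
end

section
/- Let P be a positive integer and r a real with 0 < r < 1. Then √P − 1 ≤ (−r + √(r² + 4P))/2 < √P, and consequently ⌊(−r + √(r² + 4P))/2⌋ ≤ ⌈√P − 1⌉. -/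
/-!
The number `t = (-r + √(r² + 4P)) / 2` is the nonnegative root of `t² + r t = P`.
Since `r ≤ 2`, `P = t² + r t ≤ (t + 1)²`, so `√P - 1 ≤ t`; since `r t > 0`, `t² < P`, so `t < √P`.
The floor estimate follows from `⌊t⌋ ≤ t < √P ≤ ⌈√P - 1⌉ + 1`.
-/

namespace Real

variable {r x : ℝ}

lemma neg_add_sqrt_sq_add_four_mul_div_two_pos (hx : 0 < x) :
    0 < (-r + √(r ^ 2 + 4 * x)) / 2 := by
  have : r < √(r ^ 2 + 4 * x) :=
    (le_abs_self r).trans_lt <|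
      (sqrt_sq_eq_abs r).symm.trans_lt (sqrt_lt_sqrt (sq_nonneg r) (by linarith))
  linarith

lemma neg_add_sqrt_sq_add_four_mul_div_two_sq_add (hx : 0 ≤ x) :
    ((-r + √(r ^ 2 + 4 * x)) / 2) ^ 2 + r * ((-r + √(r ^ 2 + 4 * x)) / 2) = x := by
  have := sq_sqrt (show 0 ≤ r ^ 2 + 4 * x by positivity)
  linear_combination this / 4

lemma sqrt_sub_one_le_of_sq_add_mul_eq {t : ℝ} (ht : 0 ≤ t) (hr : r ≤ 2) (h : t ^ 2 + r * t = x) :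
    √x - 1 ≤ t := by
  have : √x ≤ t + 1 := (sqrt_le_left (by linarith)).mpr (by nlinarith)
  linarith

lemma lt_sqrt_of_sq_add_mul_eq {t : ℝ} (ht : 0 < t) (hr : 0 < r) (h : t ^ 2 + r * t = x) :
    t < √x :=
  (lt_sqrt ht.le).mpr (by nlinarith [mul_pos hr ht])

end Real

lemma Int.floor_le_ceil_of_lt_add_one {α : Type*} [Ring α] [LinearOrder α] [FloorRing α]
    [IsOrderedRing α] {a b : α} (h : a < b + 1) : ⌊a⌋ ≤ ⌈b⌉ := by
  have : (⌊a⌋ : α) < ⌈b⌉ + 1 :=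
    calc (⌊a⌋ : α) ≤ a := Int.floor_le a
      _ < b + 1 := h
      _ ≤ ⌈b⌉ + 1 := by gcongr; exact Int.le_ceil b
  exact Int.lt_add_one_iff.mp (by exact_mod_cast this)

/-- The maximum number of wasted retries is ⌈√P − 1⌉, bounding
(−r + √(r² + 4P))/2 between √P − 1 and √P. -/
theorem wasted_retries_sqrt_bound
    (P : ℕ) (hP : 0 < P) (r : ℝ) (hr0 : 0 < r) (hr1 : r < 1) :
    Real.sqrt P - 1 ≤ (-r + Real.sqrt (r ^ 2 + 4 * P)) / 2 ∧
    (-r + Real.sqrt (r ^ 2 + 4 * P)) / 2 < Real.sqrt P ∧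
    ⌊(-r + Real.sqrt (r ^ 2 + 4 * P)) / 2⌋ ≤ ⌈Real.sqrt P - 1⌉ := by
  have hPpos : (0 : ℝ) < P := by exact_mod_cast hP
  have hroot := Real.neg_add_sqrt_sq_add_four_mul_div_two_sq_add (r := r) hPpos.le
  have hpos := Real.neg_add_sqrt_sq_add_four_mul_div_two_pos (r := r) hPpos
  have hupper := Real.lt_sqrt_of_sq_add_mul_eq hpos hr0 hroot
  refine ⟨Real.sqrt_sub_one_le_of_sq_add_mul_eq hpos.le (by linarith) hroot, hupper, ?_⟩
  exact Int.floor_le_ceil_of_lt_add_one (by linarith)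
end

section
/- Let q be a nonnegative integer and r a real with 0 ≤ r < 1. The function g(P) = ((q + 1 − P + r) + √((q + 1 − P + r)² + 4P))/2 − r is monotone non-increasing in P on the real interval [q + 2, ∞). -/
/-!
Writing `u = q + 1 + r - P`, one has `u² + 4P = (2 - u)² + 4(q + r)`, so with `t = 2 - u` the
function is `(2 + √(t² + K) - t)/2 - r` for the constant `K = 4(q + r) ≥ 0`, and `t` increases
with `P`. For `K ≥ 0`, `t ↦ √(t² + K) - t` is antitone on all of `ℝ`: its slope `t/√(t² + K) - 1`
is never positive.
-/

theorem Real.antitone_sqrt_sq_add_sub {K : ℝ} (hK : 0 ≤ K) :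
    Antitone fun t : ℝ => √(t ^ 2 + K) - t := by
  intro t₁ t₂ ht
  have hs₁ : t₁ ≤ √(t₁ ^ 2 + K) := Real.le_sqrt_of_sq_le (by linarith)
  have hsq₁ : √(t₁ ^ 2 + K) ^ 2 = t₁ ^ 2 + K := Real.sq_sqrt (by positivity)
  have hrhs : 0 ≤ √(t₁ ^ 2 + K) + (t₂ - t₁) := by positivity
  suffices √(t₂ ^ 2 + K) ≤ √(t₁ ^ 2 + K) + (t₂ - t₁) by dsimp only; linarith
  rw [Real.sqrt_le_left hrhs]
  nlinarith [mul_le_mul_of_nonneg_right hs₁ (sub_nonneg.2 ht)]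

theorem antitone_sub_add_sqrt_sq_add {c : ℝ} (hc : 1 ≤ c) :
    Antitone fun P : ℝ => c - P + √((c - P) ^ 2 + 4 * P) := by
  intro P₁ P₂ hP
  have hK : 0 ≤ 4 * (c - 1) := by linarith
  have key := Real.antitone_sqrt_sq_add_sub hK (show P₁ + 2 - c ≤ P₂ + 2 - c by linarith)
  have shift (P : ℝ) : (c - P) ^ 2 + 4 * P = (P + 2 - c) ^ 2 + 4 * (c - 1) := by ring
  dsimp only at key ⊢
  rw [shift P₁, shift P₂]
  linarith

theorem wasted_retries_antitone_high_general
    (q : ℕ) (r : ℝ) (hr0 : 0 ≤ r) :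
    AntitoneOn
      (fun P : ℝ =>
        (((q : ℝ) + 1 - P + r) +
          Real.sqrt (((q : ℝ) + 1 - P + r) ^ 2 + 4 * P)) / 2 - r)
      (Set.Ici ((q : ℝ) + 2)) := by
  have hc : 1 ≤ (q : ℝ) + 1 + r := by linarith [(q.cast_nonneg : (0 : ℝ) ≤ q)]
  intro P₁ _ P₂ _ hP
  have key := antitone_sub_add_sqrt_sq_add hc hP
  have reorder (P : ℝ) : (q : ℝ) + 1 - P + r = (q : ℝ) + 1 + r - P := by ring
  dsimp only at key ⊢
  simp only [reorder]
  linarith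

/-- The pre-floor count of wasted retries is non-increasing on [q+2, ∞). -/
theorem wasted_retries_antitone_high
    (q : ℕ) (r : ℝ) (hr0 : 0 ≤ r) (hr1 : r < 1) :
    AntitoneOn
      (fun P : ℝ =>
        (((q : ℝ) + 1 - P + r) +
          Real.sqrt (((q : ℝ) + 1 - P + r) ^ 2 + 4 * P)) / 2 - r)
      (Set.Ici ((q : ℝ) + 2)) :=
  wasted_retries_antitone_high_general q r hr0
end

section
/- Let rc, cw, cc be positive real numbers and t₀ a real number. There exists a unique differentiable function e : [t₀, ∞) → ℝ with e(t₀) = 0 and e'(t) = cc·(cc/2 + e(t))/(rc + cw + cc + e(t)) for all t ≥ t₀. Moreover e is strictly increasing, e(t) ≥ 0 for all t ≥ t₀, and e(t) ≤ cc·(t − t₀) for all t ≥ t₀. -/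
open Set Filter Real

/-! Writing `c / 2 + e = (c / 2) exp s`, the equation `e' = c (c / 2 + e) / (K + e)` separates into
`((c / 2) exp s + K - c / 2) s' = c`, so a solution is obtained by inverting the increasing
bijection `s ↦ (c / 2) (exp s - 1) + (K - c / 2) s`. Along any solution with `e t₀ = 0` the rate
stays in `(0, c]`, because the rate is positive on the boundary `e = 0`, which therefore cannot be
crossed; this gives monotonicity and `e t ≤ c (t - t₀)`. On `e ≥ 0` the rate is Lipschitz, whence
uniqueness. -/

/-- `K` stands for `rc + cw + cc`. -/
noncomputable def expansionRate (c K x : ℝ) : ℝ := c * (c / 2 + x) / (K + x)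

def IsExpansionSolution (c K t₀ : ℝ) (f : ℝ → ℝ) : Prop :=
  f t₀ = 0 ∧ ∀ t ∈ Ici t₀, HasDerivWithinAt f (expansionRate c K (f t)) (Ici t₀) t

section Rate

variable {c K x : ℝ}

lemma expansionRate_pos (hc : 0 < c) (hK : 0 < K) (hx : 0 ≤ x) : 0 < expansionRate c K x := by
  unfold expansionRate; positivity

lemma expansionRate_le (hc : 0 < c) (hcK : c / 2 < K) (hx : 0 ≤ x) : expansionRate c K x ≤ c := by
  unfold expansionRate
  rw [div_le_iff₀ (by linarith)]
  nlinarith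

lemma hasDerivAt_expansionRate (hx : K + x ≠ 0) :
    HasDerivAt (expansionRate c K) (c * (K - c / 2) / (K + x) ^ 2) x := by
  have hnum : HasDerivAt (fun y => c * (c / 2 + y)) c x := by
    simpa using ((hasDerivAt_id' x).const_add (c / 2)).const_mul c
  exact (hnum.fun_div ((hasDerivAt_id' x).const_add K) hx).congr_deriv (by ring)

lemma lipschitzOnWith_expansionRate (hK : 0 < K) :
    LipschitzOnWith (Real.toNNReal (|c * (K - c / 2)| / K ^ 2)) (expansionRate c K) (Ici 0) := by
  refine (convex_Ici 0).lipschitzOnWith_of_nnnorm_hasDerivWithin_le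
    (fun x hx => (hasDerivAt_expansionRate (by linarith [mem_Ici.1 hx])).hasDerivWithinAt) ?_
  intro x hx
  rw [mem_Ici] at hx
  rw [← NNReal.coe_le_coe, coe_nnnorm, Real.norm_eq_abs, abs_div, abs_sq,
    Real.coe_toNNReal _ (by positivity)]
  exact div_le_div_of_nonneg_left (abs_nonneg _) (by positivity) (by nlinarith)

end Rate

namespace IsExpansionSolution

variable {c K t₀ : ℝ} {f : ℝ → ℝ}

lemma continuousOn (hf : IsExpansionSolution c K t₀ f) : ContinuousOn f (Ici t₀) :=
  fun t ht => (hf.2 t ht).continuousWithinAt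

lemma hasDerivWithinAt_Ici (hf : IsExpansionSolution c K t₀ f) {t : ℝ} (ht : t₀ ≤ t) :
    HasDerivWithinAt f (expansionRate c K (f t)) (Ici t) t :=
  (hf.2 t ht).mono (Ici_subset_Ici.2 ht)

lemma nonneg (hf : IsExpansionSolution c K t₀ f) (hc : 0 < c) (hK : 0 < K) {t : ℝ}
    (ht : t₀ ≤ t) : 0 ≤ f t := by
  refine image_le_of_deriv_right_lt_deriv_boundary' (f' := 0) continuousOn_const
    (fun _ _ => hasDerivWithinAt_const _ _ _) hf.1.symm.le
    (hf.continuousOn.mono Icc_subset_Ici_self) (fun x hx => hf.hasDerivWithinAt_Ici hx.1) ?_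
    ⟨ht, le_rfl⟩
  intro x _ hx
  rw [← hx]
  exact expansionRate_pos hc hK le_rfl

lemma strictMonoOn (hf : IsExpansionSolution c K t₀ f) (hc : 0 < c) (hK : 0 < K) :
    StrictMonoOn f (Ici t₀) := by
  refine strictMonoOn_of_hasDerivWithinAt_pos (f' := fun t => expansionRate c K (f t))
    (convex_Ici t₀) hf.continuousOn (fun x hx => ?_) (fun x hx => ?_)
  all_goals rw [interior_Ici] at hx
  · exact (hf.2 x (mem_Ici_of_Ioi hx)).mono interior_subset
  · exact expansionRate_pos hc hK (hf.nonneg hc hK (le_of_lt hx))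

lemma le_mul_sub (hf : IsExpansionSolution c K t₀ f) (hc : 0 < c) (hcK : c / 2 < K) {t : ℝ}
    (ht : t₀ ≤ t) : f t ≤ c * (t - t₀) := by
  have hK : 0 < K := by linarith
  refine image_le_of_deriv_right_le_deriv_boundary (B := fun t => c * (t - t₀))
    (hf.continuousOn.mono Icc_subset_Ici_self) (fun x hx => hf.hasDerivWithinAt_Ici hx.1)
    (by simp [hf.1]) (by fun_prop) (fun x _ => ?_)
    (fun _ hx => expansionRate_le hc hcK (hf.nonneg hc hK hx.1)) ⟨ht, le_rfl⟩
  simpa using ((hasDerivWithinAt_id x (Ici x)).sub_const t₀).const_mul c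

lemma eqOn (hf : IsExpansionSolution c K t₀ f) {g : ℝ → ℝ} (hg : IsExpansionSolution c K t₀ g)
    (hc : 0 < c) (hK : 0 < K) : EqOn f g (Ici t₀) := fun _ ht =>
  ODE_solution_unique_of_mem_Icc_right (v := fun _ => expansionRate c K) (s := fun _ => Ici 0)
    (fun _ _ => lipschitzOnWith_expansionRate hK)
    (hf.continuousOn.mono Icc_subset_Ici_self) (fun _ hx => hf.hasDerivWithinAt_Ici hx.1)
    (fun _ hx => hf.nonneg hc hK hx.1)
    (hg.continuousOn.mono Icc_subset_Ici_self) (fun _ hx => hg.hasDerivWithinAt_Ici hx.1)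
    (fun _ hx => hg.nonneg hc hK hx.1) (hf.1.trans hg.1.symm) ⟨ht, le_rfl⟩

end IsExpansionSolution

noncomputable def expansionPrimitive (a q s : ℝ) : ℝ := a * (exp s - 1) + q * s

section Primitive

variable {a q : ℝ}

lemma hasDerivAt_expansionPrimitive (s : ℝ) :
    HasDerivAt (expansionPrimitive a q) (a * exp s + q) s :=
  ((((hasDerivAt_exp s).sub_const 1).const_mul a).fun_add
    ((hasDerivAt_id' s).const_mul q)).congr_deriv (by ring)

lemma expansionPrimitive_zero : expansionPrimitive a q 0 = 0 := by
  simp [expansionPrimitive]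

lemma strictMono_expansionPrimitive (ha : 0 ≤ a) (hq : 0 < q) :
    StrictMono (expansionPrimitive a q) :=
  strictMono_of_hasDerivAt_pos hasDerivAt_expansionPrimitive fun s => by positivity

lemma surjective_expansionPrimitive (ha : 0 ≤ a) (hq : 0 < q) :
    Function.Surjective (expansionPrimitive a q) := by
  refine Continuous.surjective
    (continuous_iff_continuousAt.2 fun s => (hasDerivAt_expansionPrimitive s).continuousAt) ?_ ?_
  · refine tendsto_atTop_mono (fun s => ?_)
      (tendsto_atTop_add_const_right _ (-a) (tendsto_id.const_mul_atTop hq))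
    have := exp_pos s
    simp only [expansionPrimitive, id]
    nlinarith
  · refine tendsto_atBot_mono' _ ?_ (tendsto_id.const_mul_atBot hq)
    filter_upwards [eventually_le_atBot 0] with s hs
    have := exp_le_one_iff.2 hs
    simp only [expansionPrimitive, id]
    nlinarith

end Primitive

lemma OrderIso.hasDerivAt_symm (φ : ℝ ≃o ℝ) {φ' : ℝ → ℝ} (hφ : ∀ x, HasDerivAt φ (φ' x) x)
    {y : ℝ} (hy : φ' (φ.symm y) ≠ 0) : HasDerivAt φ.symm (φ' (φ.symm y))⁻¹ y :=
  HasDerivAt.of_local_left_inverse φ.symm.continuous.continuousAt (hφ _) hy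
    (Eventually.of_forall φ.apply_symm_apply)

theorem exists_isExpansionSolution {c K : ℝ} (hc : 0 < c) (hcK : c / 2 < K) (t₀ : ℝ) :
    ∃ e, IsExpansionSolution c K t₀ e := by
  have hq : 0 < K - c / 2 := by linarith
  have ha : 0 ≤ c / 2 := by positivity
  let φ := (strictMono_expansionPrimitive ha hq).orderIsoOfSurjective _
    (surjective_expansionPrimitive ha hq)
  let S t := φ.symm (c * (t - t₀))
  refine ⟨fun t => c / 2 * (exp (S t) - 1), ?_, fun t _ => ?_⟩
  · have : S t₀ = 0 := φ.symm_apply_eq.2 (by simp [φ, expansionPrimitive_zero])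
    simp [this]
  · have hS : HasDerivAt S ((c / 2 * exp (S t) + (K - c / 2))⁻¹ * c) t :=
      ((φ.hasDerivAt_symm hasDerivAt_expansionPrimitive (by positivity)).comp t
        (((hasDerivAt_id' t).sub_const t₀).const_mul c)).congr_deriv (by ring)
    refine ((hS.exp.sub_const 1).const_mul (c / 2)).hasDerivWithinAt.congr_deriv ?_
    have : 0 < c / 2 * exp (S t) + (K - c / 2) := by positivity
    simp only [expansionRate]
    field_simp
    ring

/-- Existence, uniqueness and basic properties of the expansion function,
solution of the expansion differential equation. -/
theorem expansion_ode_solution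
    (rc cw cc t₀ : ℝ) (hrc : 0 < rc) (hcw : 0 < cw) (hcc : 0 < cc) :
    ∃ e : ℝ → ℝ,
      (e t₀ = 0 ∧
        (∀ t ∈ Set.Ici t₀,
          HasDerivWithinAt e
            (cc * (cc / 2 + e t) / (rc + cw + cc + e t)) (Set.Ici t₀) t) ∧
        StrictMonoOn e (Set.Ici t₀) ∧
        (∀ t ∈ Set.Ici t₀, 0 ≤ e t) ∧
        (∀ t ∈ Set.Ici t₀, e t ≤ cc * (t - t₀))) ∧
      ∀ e' : ℝ → ℝ,
        (e' t₀ = 0 ∧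
          ∀ t ∈ Set.Ici t₀,
            HasDerivWithinAt e'
              (cc * (cc / 2 + e' t) / (rc + cw + cc + e' t)) (Set.Ici t₀) t) →
        ∀ t ∈ Set.Ici t₀, e' t = e t := by
  have hcK : cc / 2 < rc + cw + cc := by linarith
  have hK : 0 < rc + cw + cc := by linarith
  obtain ⟨e, he⟩ := exists_isExpansionSolution hcc hcK t₀
  exact ⟨e, ⟨he.1, he.2, he.strictMonoOn hcc hK, fun _ ht => he.nonneg hcc hK ht,
    fun _ ht => he.le_mul_sub hcc hcK ht⟩,
    fun e' he' => IsExpansionSolution.eqOn he' he hcc hK⟩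
end

section
/- Let rc, cw, cc, e₀ be real numbers with cc > 0, cc ≤ rc + cw and e₀ ≥ 0, and set L = rc + cw + cc + e₀. Define d : [0, L] → ℝ by d(t) = 0 for 0 ≤ t ≤ rc + cw − cc, d(t) = t − (rc + cw − cc) for rc + cw − cc ≤ t ≤ rc + cw, d(t) = cc for rc + cw ≤ t ≤ rc + cw + e₀, and d(t) = 0 for rc + cw + e₀ ≤ t ≤ L. Then ∫₀^L d(t) dt = cc²/2 + e₀·cc, so that (1/L)·∫₀^L d(t) dt = (cc²/2 + e₀·cc)/(rc + cw + cc + e₀). -/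
/-! The delay cost is a unit-slope ramp over `[rc + cw - cc, rc + cw]`, then a plateau of height
`cc` up to `rc + cw + e₀`, and zero elsewhere, so its integral is the triangle `cc ^ 2 / 2` plus the
rectangle `e₀ * cc`. Between consecutive breakpoints it agrees with a continuous function, which
gives integrability and the value of each piece. -/

open Set MeasureTheory intervalIntegral

noncomputable def rampPlateau (a h c t : ℝ) : ℝ :=
  if t ≤ a then 0 else if t ≤ a + h then t - a else if t ≤ c then h else 0

section rampPlateau

variable {a h c t : ℝ}

lemma rampPlateau_of_le (ht : t ≤ a) : rampPlateau a h c t = 0 := by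
  simp [rampPlateau, ht]

lemma rampPlateau_of_mem_Ioc_ramp (ht : t ∈ Ioc a (a + h)) : rampPlateau a h c t = t - a := by
  simp [rampPlateau, not_le.mpr ht.1, ht.2]

lemma rampPlateau_of_mem_Ioc_plateau (hh : 0 ≤ h) (ht : t ∈ Ioc (a + h) c) :
    rampPlateau a h c t = h := by
  have hat : ¬ t ≤ a := by linarith [ht.1]
  simp [rampPlateau, hat, not_le.mpr ht.1, ht.2]

lemma rampPlateau_of_lt (hh : 0 ≤ h) (hc : a + h ≤ c) (ht : c < t) : rampPlateau a h c t = 0 := by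
  have hat : ¬ t ≤ a := by linarith
  have haht : ¬ t ≤ a + h := by linarith
  simp [rampPlateau, hat, haht, not_le.mpr ht]

end rampPlateau

lemma intervalIntegrable_and_integral_eq_of_eqOn_Ioo {f g : ℝ → ℝ} {p q : ℝ} (hpq : p ≤ q)
    (hg : IntervalIntegrable g volume p q) (hfg : EqOn f g (Ioo p q)) :
    IntervalIntegrable f volume p q ∧ ∫ t in p..q, f t = ∫ t in p..q, g t := by
  rw [← uIoo_of_le hpq] at hfg
  exact ⟨hg.congr_uIoo hfg.symm, integral_congr_uIoo hfg⟩

theorem integral_rampPlateau {p a h c q : ℝ} (hpa : p ≤ a) (hh : 0 ≤ h) (hc : a + h ≤ c)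
    (hcq : c ≤ q) :
    ∫ t in p..q, rampPlateau a h c t = h ^ 2 / 2 + (c - (a + h)) * h := by
  obtain ⟨i₁, v₁⟩ := intervalIntegrable_and_integral_eq_of_eqOn_Ioo hpa
    (intervalIntegrable_const (c := (0 : ℝ))) fun t ht => rampPlateau_of_le ht.2.le
  obtain ⟨i₂, v₂⟩ := intervalIntegrable_and_integral_eq_of_eqOn_Ioo (by linarith : a ≤ a + h)
    ((continuous_sub_right a).intervalIntegrable _ _)
    fun t ht => rampPlateau_of_mem_Ioc_ramp (Ioo_subset_Ioc_self ht)
  obtain ⟨i₃, v₃⟩ := intervalIntegrable_and_integral_eq_of_eqOn_Ioo hc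
    (intervalIntegrable_const (c := h))
    fun t ht => rampPlateau_of_mem_Ioc_plateau hh (Ioo_subset_Ioc_self ht)
  obtain ⟨i₄, v₄⟩ := intervalIntegrable_and_integral_eq_of_eqOn_Ioo hcq
    (intervalIntegrable_const (c := (0 : ℝ))) fun t ht => rampPlateau_of_lt hh hc ht.1
  have hramp : ∫ t in a..a + h, (t - a) = h ^ 2 / 2 := by
    simp [integral_comp_sub_right (fun t => t) a]
  rw [← integral_add_adjacent_intervals (i₁.trans i₂) (i₃.trans i₄),
    ← integral_add_adjacent_intervals i₁ i₂, ← integral_add_adjacent_intervals i₃ i₄,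
    v₁, v₂, v₃, v₄, hramp]
  simp

/-- Integral of the delay cost function over an expanded retry. -/
theorem expansion_cost_integral
    (rc cw cc e₀ : ℝ) (hcc : 0 < cc) (hle : cc ≤ rc + cw) (he₀ : 0 ≤ e₀)
    (L : ℝ) (hL : L = rc + cw + cc + e₀)
    (d : ℝ → ℝ)
    (hd : ∀ t : ℝ,
      d t = if t ≤ rc + cw - cc then 0
            else if t ≤ rc + cw then t - (rc + cw - cc)
            else if t ≤ rc + cw + e₀ then cc
            else 0) :
    (∫ t in (0 : ℝ)..L, d t) = cc ^ 2 / 2 + e₀ * cc ∧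
    (1 / L) * ∫ t in (0 : ℝ)..L, d t =
      (cc ^ 2 / 2 + e₀ * cc) / (rc + cw + cc + e₀) := by
  have hd' : d = rampPlateau (rc + cw - cc) cc (rc + cw + e₀) :=
    funext fun t => by rw [hd, rampPlateau, sub_add_cancel]
  have hint : ∫ t in (0 : ℝ)..L, d t = cc ^ 2 / 2 + e₀ * cc := by
    rw [hd', integral_rampPlateau (by linarith) hcc.le (by linarith) (by linarith)]
    ring
  exact ⟨hint, by rw [hint, hL]; ring⟩
end

section
/- Let P be a positive integer and let pw ≥ c > 0 be real numbers. For e ≥ 0 define x(e) = (pw + e)/(c + e), fmin(e) = max(0, P − 1 − ⌊x(e)⌋), and H(e) = P·(1 + fmin(e))/(x(e) + 1 + fmin(e)). Then H is monotone non-decreasing on [0, ∞). -/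
/-- The average number of threads inside the retry loop is a non-decreasing
function of the expansion. -/
theorem average_threads_monotone
    (P : ℕ) (hP : 0 < P) (pw c : ℝ) (hc : 0 < c) (hpw : c ≤ pw) :
    MonotoneOn
      (fun e : ℝ =>
        (P : ℝ) * (1 + (max 0 ((P : ℤ) - 1 - ⌊(pw + e) / (c + e)⌋) : ℤ)) /
          ((pw + e) / (c + e) + 1 +
            (max 0 ((P : ℤ) - 1 - ⌊(pw + e) / (c + e)⌋) : ℤ)))
      (Set.Ici 0) := by
  intro a ha b hb hab
  simp only [Set.mem_Ici] at ha hb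
  have hca : 0 < c + a := by linarith
  have hcb : 0 < c + b := by linarith
  set xa : ℝ := (pw + a) / (c + a) with hxa
  set xb : ℝ := (pw + b) / (c + b) with hxb
  have hx : xb ≤ xa := by
    rw [hxa, hxb, div_le_div_iff₀ hcb hca]
    nlinarith
  have hx1 : 1 ≤ xb := by
    rw [hxb, le_div_iff₀ hcb]; linarith
  set fa : ℝ := ((max 0 ((P : ℤ) - 1 - ⌊xa⌋) : ℤ) : ℝ) with hfa
  set fb : ℝ := ((max 0 ((P : ℤ) - 1 - ⌊xb⌋) : ℤ) : ℝ) with hfb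
  have hfloor : ⌊xb⌋ ≤ ⌊xa⌋ := Int.floor_mono hx
  have hf : fa ≤ fb := by
    rw [hfa, hfb]
    exact_mod_cast max_le_max le_rfl (by omega)
  have hfa0 : (0 : ℝ) ≤ fa := by
    rw [hfa]; exact_mod_cast le_max_left 0 _
  have hda : 0 < xa + 1 + fa := by linarith
  have hdb : 0 < xb + 1 + fb := by linarith
  have hP1 : (1 : ℝ) ≤ (P : ℝ) := by exact_mod_cast hP
  rw [div_le_div_iff₀ hda hdb]
  nlinarith [mul_nonneg (by linarith : (0:ℝ) ≤ 1 + fb) (by linarith : (0:ℝ) ≤ xa - xb),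
    mul_nonneg (sub_nonneg.mpr hf) (by linarith : (0:ℝ) ≤ xb),
    mul_nonneg (by linarith : (0:ℝ) ≤ (P:ℝ)) (mul_nonneg (by linarith : (0:ℝ) ≤ 1 + fb) (by linarith : (0:ℝ) ≤ xa - xb)),
    mul_nonneg (by linarith : (0:ℝ) ≤ (P:ℝ)) (mul_nonneg (sub_nonneg.mpr hf) (by linarith : (0:ℝ) ≤ xb))]
end
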